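/- arXiv:2403.06156 — 2 statements merged into one kernel-verified Lean document; each statement's English description precedes it below -/
import Mathlib

section
/- The Miura relation holds: with μ = ζ(u+v) - ζ(u) - ζ(v), we have 2℘(u) + λ₂ + ℘(v) = μ² + dμ/du. -/
open Complex

/-- `WeierstrassData` packages the Weierstrass sigma function `σ` of the period
lattice `Γ = 2ℤω₁ + 2ℤω₂`, together with the zeta function `ζ = σ'/σ` and
`℘ = -(log σ)'' = -ζ'`. -/
structure WeierstrassData where
  σ : ℂ → ℂ
  ζ : ℂ → ℂ
  ℘ : ℂ → ℂ
  ω₁ : ℂ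
  ω₂ : ℂ
  Γ : Set ℂ
  hΓ : Γ = {z : ℂ | ∃ m n : ℤ, z = 2 * m * ω₁ + 2 * n * ω₂}
  nondeg : (ω₂ / ω₁).im ≠ 0
  σ_diff : Differentiable ℂ σ
  σ_zero : ∀ z : ℂ, σ z = 0 ↔ z ∈ Γ
  σ_odd : ∀ z : ℂ, σ (-z) = - σ z
  σ_deriv_zero : deriv σ 0 = 1
  ζ_def : ∀ z ∉ Γ, ζ z = deriv σ z / σ z
  ζ_diff : ∀ z ∉ Γ, DifferentiableAt ℂ ζ z
  ℘_def : ∀ z ∉ Γ, ℘ z = - deriv ζ z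
  ℘_diff : ∀ z ∉ Γ, DifferentiableAt ℂ ℘ z
  ℘_diff2 : ∀ z ∉ Γ, DifferentiableAt ℂ (deriv ℘) z
/-- The curve condition `y² = x³ + λ₂x² + λ₁x + λ₀` for `x = ℘`, `y = ℘'/2`. -/
def WeierstrassData.OnCurveL (W : WeierstrassData) (l2 l1 l0 : ℂ) : Prop :=
  ∀ z ∉ W.Γ, (deriv W.℘ z / 2) ^ 2
    = W.℘ z ^ 3 + l2 * W.℘ z ^ 2 + l1 * W.℘ z + l0

/-!
Put `A(u) = μ(u)² - ℘(u) - ℘(u+v) - ℘(v) - λ₂`. Since `μ' = ℘(u) - ℘(u+v)`, the Miura relation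
is `A = 0`. No periodicity of `℘` is available, so instead of Liouville's theorem we use the
curve: differentiating it gives `℘'' = 6℘² + 4λ₂℘ + 2λ₁`, and then `B = A'` and `D = μ'` satisfy
`B' D = B D'`. Hence `B = κ D`, so `A - κ μ` is constant on the connected set
`{u ∉ Γ, u + v ∉ Γ}`. Near `u = 0` we have `ζ(u) = 1/u + g(u)` with `g` analytic and `g(0) = 0`
(as `σ(u)/u` is even); thus `u μ(u) → -1`, while the curve forces `λ₂ = 3 g'(0)`, which makes
`A(u) → 0`. Letting `u → 0` gives first `κ = 0` and then `A = 0`.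
-/

open Filter Topology Set Metric

theorem Function.Even.deriv_zero {𝕜 : Type*} [NontriviallyNormedField 𝕜] [CharZero 𝕜]
    {f : 𝕜 → 𝕜} (hf : f.Even) : deriv f 0 = 0 := by
  have h := deriv_comp_neg f 0
  simp only [hf.eq, neg_zero] at h
  exact self_eq_neg.1 h

theorem exists_eqOn_const_mul_of_wronskian {U : Set ℂ} (hU : IsOpen U) (hUc : IsPreconnected U)
    {f g f' g' : ℂ → ℂ} (hf : ∀ z ∈ U, HasDerivAt f (f' z) z)
    (hg : ∀ z ∈ U, HasDerivAt g (g' z) z) (hfg : ∀ z ∈ U, f' z * g z = f z * g' z)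
    {z₀ : ℂ} (hz₀ : z₀ ∈ U) (hgz₀ : g z₀ ≠ 0) :
    ∃ κ : ℂ, EqOn f (fun z => κ * g z) U := by
  obtain ⟨r, hr, hball⟩ := Metric.eventually_nhds_iff_ball.1
    ((hU.eventually_mem hz₀).and ((hg z₀ hz₀).continuousAt.eventually_ne hgz₀))
  have hquot : ∀ z ∈ ball z₀ r, HasDerivAt (fun z => f z / g z) 0 z := by
    intro z hz
    obtain ⟨hzU, hgz⟩ := hball z hz
    simpa [hfg z hzU] using (hf z hzU).fun_div (hg z hzU) hgz
  obtain ⟨κ, hκ⟩ := isOpen_ball.exists_is_const_of_deriv_eq_zero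
    (convex_ball z₀ r).isPreconnected
    (fun z hz => (hquot z hz).differentiableAt.differentiableWithinAt)
    (fun z hz => (hquot z hz).deriv)
  have hfA : AnalyticOnNhd ℂ f U := DifferentiableOn.analyticOnNhd
    (fun z hz => (hf z hz).differentiableAt.differentiableWithinAt) hU
  have hgA : AnalyticOnNhd ℂ g U := DifferentiableOn.analyticOnNhd
    (fun z hz => (hg z hz).differentiableAt.differentiableWithinAt) hU
  refine ⟨κ, hfA.eqOn_of_preconnected_of_eventuallyEq (analyticOnNhd_const.mul hgA) hUc hz₀ ?_⟩
  filter_upwards [ball_mem_nhds z₀ hr] with z hz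
  rw [← hκ z hz, div_mul_cancel₀ _ (hball z hz).2]

theorem eq_zero_of_tendsto_mul_of_eventually_const {F : ℂ → ℂ} {C c : ℂ}
    (hF : ∀ᶠ w in 𝓝[≠] 0, F w = C) (h : Tendsto (fun w => w * F w) (𝓝[≠] 0) (𝓝 c)) :
    c = 0 := by
  have h0 : Tendsto (fun w => w * C) (𝓝[≠] 0) (𝓝 0) := by
    simpa using ((tendsto_id (x := 𝓝 (0 : ℂ))).mono_left nhdsWithin_le_nhds).mul_const C
  refine tendsto_nhds_unique h (h0.congr' ?_)
  filter_upwards [hF] with w hw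
  rw [hw]

namespace WeierstrassData

variable (W : WeierstrassData)

theorem countable_Γ : W.Γ.Countable := by
  rw [W.hΓ]
  exact (Set.countable_range fun p : ℤ × ℤ => 2 * p.1 * W.ω₁ + 2 * p.2 * W.ω₂).mono
    (by rintro z ⟨m, n, rfl⟩; exact ⟨(m, n), rfl⟩)

theorem isOpen_compl_Γ : IsOpen W.Γᶜ := by
  have : W.Γ = W.σ ⁻¹' {0} := by ext z; exact (W.σ_zero z).symm
  rw [this]
  exact (isClosed_singleton.preimage W.σ_diff.continuous).isOpen_compl

theorem σ_eq_mul_dslope (z : ℂ) : W.σ z = z * dslope W.σ 0 z := by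
  have hσ0 : W.σ 0 = 0 := (W.σ_zero 0).2 (by rw [W.hΓ]; exact ⟨0, 0, by simp⟩)
  simpa [hσ0] using (sub_smul_dslope W.σ 0 z).symm

theorem differentiable_dslope_σ : Differentiable ℂ (dslope W.σ 0) := fun z =>
  ((Complex.differentiableOn_dslope univ_mem).2 W.σ_diff.differentiableOn z trivial)
    |>.differentiableAt univ_mem

theorem even_dslope_σ : (dslope W.σ 0).Even := by
  intro z
  rcases eq_or_ne z 0 with rfl | hz
  · rw [neg_zero]
  · apply mul_left_cancel₀ (neg_ne_zero.2 hz)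
    rw [← σ_eq_mul_dslope, W.σ_odd, σ_eq_mul_dslope, neg_mul]

theorem dslope_σ_zero : dslope W.σ 0 0 = 1 := by
  rw [dslope_same, W.σ_deriv_zero]

theorem exists_zeta_eq_inv_add : ∃ g : ℂ → ℂ, AnalyticAt ℂ g 0 ∧ g 0 = 0 ∧
    ∀ᶠ w in 𝓝[≠] 0, w ∉ W.Γ ∧ W.ζ w = w⁻¹ + g w := by
  have hs := W.differentiable_dslope_σ
  have hs0 := W.dslope_σ_zero
  have hs'0 := W.even_dslope_σ.deriv_zero
  have hσ := W.σ_eq_mul_dslope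
  set s := dslope W.σ 0
  have hsA : AnalyticAt ℂ s 0 := hs.analyticAt 0
  refine ⟨fun z => deriv s z / s z, hsA.deriv.div hsA (by simp [hs0]), by simp [hs'0], ?_⟩
  filter_upwards [nhdsWithin_le_nhds (hsA.continuousAt.eventually_ne (y := 0) (by simp [hs0])),
    self_mem_nhdsWithin] with w hsw (hw : w ≠ 0)
  have hσw : W.σ w ≠ 0 := by rw [hσ]; exact mul_ne_zero hw hsw
  have hσ' : deriv W.σ w = s w + w * deriv s w := by
    rw [show W.σ = fun z => z * s z from funext hσ]
    simpa using ((hasDerivAt_id' w).fun_mul (hs w).hasDerivAt).deriv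
  have hwΓ : w ∉ W.Γ := fun h => hσw ((W.σ_zero w).2 h)
  refine ⟨hwΓ, ?_⟩
  rw [W.ζ_def w hwΓ, hσ', hσ]
  field_simp

theorem analyticOnNhd_wp : AnalyticOnNhd ℂ W.℘ W.Γᶜ :=
  DifferentiableOn.analyticOnNhd (fun z hz => (W.℘_diff z hz).differentiableWithinAt)
    W.isOpen_compl_Γ

theorem analyticOnNhd_deriv_wp : AnalyticOnNhd ℂ (deriv W.℘) W.Γᶜ :=
  DifferentiableOn.analyticOnNhd (fun z hz => (W.℘_diff2 z hz).differentiableWithinAt)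
    W.isOpen_compl_Γ

def μ (v u : ℂ) : ℂ := W.ζ (u + v) - W.ζ u - W.ζ v

def additionDefect (l2 v u : ℂ) : ℂ := W.μ v u ^ 2 - W.℘ u - W.℘ (u + v) - W.℘ v - l2

section Derivatives

variable {v z : ℂ} (hz : z ∉ W.Γ) (hzv : z + v ∉ W.Γ)
include hz hzv

theorem hasDerivAt_μ : HasDerivAt (W.μ v) (W.℘ z - W.℘ (z + v)) z := by
  have h : HasDerivAt (W.μ v) (deriv W.ζ (z + v) - deriv W.ζ z) z :=
    (((W.ζ_diff (z + v) hzv).hasDerivAt.comp_add_const z v).fun_sub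
      (W.ζ_diff z hz).hasDerivAt).sub_const (W.ζ v)
  rw [W.℘_def z hz, W.℘_def _ hzv]
  exact h.congr_deriv (by ring)

theorem hasDerivAt_wp_sub_wp_add :
    HasDerivAt (fun w => W.℘ w - W.℘ (w + v)) (deriv W.℘ z - deriv W.℘ (z + v)) z :=
  (W.℘_diff z hz).hasDerivAt.fun_sub ((W.℘_diff _ hzv).hasDerivAt.comp_add_const z v)

theorem hasDerivAt_additionDefect (l2 : ℂ) : HasDerivAt (W.additionDefect l2 v)
    (2 * W.μ v z * (W.℘ z - W.℘ (z + v)) - deriv W.℘ z - deriv W.℘ (z + v)) z := by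
  have h : HasDerivAt (W.additionDefect l2 v) _ z :=
    ((((W.hasDerivAt_μ hz hzv).fun_pow 2).fun_sub (W.℘_diff z hz).hasDerivAt).fun_sub
      ((W.℘_diff _ hzv).hasDerivAt.comp_add_const z v)).sub_const (W.℘ v) |>.sub_const l2
  exact h.congr_deriv (by push_cast; ring)

theorem hasDerivAt_deriv_additionDefect : HasDerivAt
    (fun w => 2 * W.μ v w * (W.℘ w - W.℘ (w + v)) - deriv W.℘ w - deriv W.℘ (w + v))
    (2 * (W.℘ z - W.℘ (z + v)) ^ 2 + 2 * W.μ v z * (deriv W.℘ z - deriv W.℘ (z + v))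
      - deriv (deriv W.℘) z - deriv (deriv W.℘) (z + v)) z :=
  ((((W.hasDerivAt_μ hz hzv).const_mul 2).fun_mul (W.hasDerivAt_wp_sub_wp_add hz hzv)).fun_sub
    (W.℘_diff2 z hz).hasDerivAt).fun_sub ((W.℘_diff2 _ hzv).hasDerivAt.comp_add_const z v)
    |>.congr_deriv (by ring)

end Derivatives

section Laurent

variable {W} {g : ℂ → ℂ} (hg : AnalyticAt ℂ g 0)
  (hζ : ∀ᶠ w in 𝓝[≠] 0, w ∉ W.Γ ∧ W.ζ w = w⁻¹ + g w)
include hg hζ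

theorem eventually_wp_eq : ∀ᶠ w in 𝓝[≠] 0, W.℘ w = (w ^ 2)⁻¹ - deriv g w := by
  filter_upwards [eventually_nhdsNE_eventually_nhds_iff.2 hζ,
    nhdsWithin_le_nhds hg.eventually_analyticAt, self_mem_nhdsWithin] with w hw hgw hw0
  have hZ : HasDerivAt (fun x => x⁻¹ + g x) (-(w ^ 2)⁻¹ + deriv g w) w :=
    (hasDerivAt_inv hw0).add hgw.differentiableAt.hasDerivAt
  have hζw : W.ζ =ᶠ[𝓝 w] fun x => x⁻¹ + g x := hw.mono fun x hx => hx.2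
  rw [W.℘_def w hw.self_of_nhds.1, hζw.deriv_eq, hZ.deriv]
  ring

theorem eventually_deriv_wp_eq :
    ∀ᶠ w in 𝓝[≠] 0, deriv W.℘ w = -2 / w ^ 3 - deriv (deriv g) w := by
  filter_upwards [eventually_nhdsNE_eventually_nhds_iff.2 (eventually_wp_eq hg hζ),
    nhdsWithin_le_nhds hg.eventually_analyticAt, self_mem_nhdsWithin] with w hw hgw (hw0 : w ≠ 0)
  have hP : HasDerivAt (fun x => (x ^ 2)⁻¹ - deriv g x)
      (-(↑2 * w ^ (2 - 1)) / (w ^ 2) ^ 2 - deriv (deriv g) w) w :=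
    ((hasDerivAt_pow 2 w).inv (pow_ne_zero 2 hw0)).sub hgw.deriv.differentiableAt.hasDerivAt
  rw [EventuallyEq.deriv_eq hw, hP.deriv]
  field_simp
  ring

theorem l2_eq_three_mul_deriv {l2 l1 l0 : ℂ} (hL : W.OnCurveL l2 l1 l0) :
    l2 = 3 * deriv g 0 := by
  set h := deriv g
  have hh : ContinuousAt h 0 := hg.deriv.continuousAt
  have hh' : ContinuousAt (deriv h) 0 := hg.deriv.deriv.continuousAt
  -- the curve equation times `w⁴`, written through `h`: unlike the curve, it extends to `w = 0`
  let F := fun w => w * deriv h w + w ^ 4 * deriv h w ^ 2 / 4 + 3 * h w - 3 * w ^ 2 * h w ^ 2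
    + w ^ 4 * h w ^ 3 - l2 * (1 - w ^ 2 * h w) ^ 2 - l1 * w ^ 2 * (1 - w ^ 2 * h w) - l0 * w ^ 4
  have hF : F =ᶠ[𝓝[≠] 0] fun _ => 0 := by
    filter_upwards [hζ, eventually_wp_eq hg hζ, eventually_deriv_wp_eq hg hζ,
      self_mem_nhdsWithin] with w hw h℘ h℘' (hw0 : w ≠ 0)
    have hFw : F w = w ^ 4 * ((deriv W.℘ w / 2) ^ 2
        - (W.℘ w ^ 3 + l2 * W.℘ w ^ 2 + l1 * W.℘ w + l0)) := by
      rw [h℘, h℘']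
      field_simp
      ring
    rw [hFw, hL w hw.1, sub_self, mul_zero]
  have := ((ContinuousAt.eventuallyEq_nhds_iff_eventuallyEq_nhdsNE (by fun_prop)
    continuousAt_const).1 hF).eq_of_nhds
  simp [F] at this
  linear_combination -this

theorem tendsto_mul_μ {v : ℂ} (hv : v ∉ W.Γ) :
    Tendsto (fun w => w * W.μ v w) (𝓝[≠] 0) (𝓝 (-1)) := by
  have hζv : ContinuousAt (fun w => W.ζ (w + v)) 0 :=
    (W.ζ_diff v hv).continuousAt.comp_of_eq (continuous_add_const v).continuousAt (zero_add v)
  have hM : ContinuousAt (fun w => w * (W.ζ (w + v) - g w - W.ζ v) - 1) 0 := by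
    have := hg.continuousAt
    fun_prop
  convert (hM.tendsto.mono_left nhdsWithin_le_nhds).congr' ?_ using 2
  · simp
  filter_upwards [hζ, self_mem_nhdsWithin] with w hw (hw0 : w ≠ 0)
  rw [μ, hw.2]
  field_simp
  ring

theorem tendsto_additionDefect {l2 l1 l0 : ℂ} (hL : W.OnCurveL l2 l1 l0) (hg0 : g 0 = 0)
    {v : ℂ} (hv : v ∉ W.Γ) : Tendsto (W.additionDefect l2 v) (𝓝[≠] 0) (𝓝 0) := by
  set φ := fun w => W.ζ (w + v) - W.ζ v - g w
  have hφ0 : φ 0 = 0 := by simp [φ, hg0]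
  have hφ : HasDerivAt φ (-W.℘ v - deriv g 0) 0 := by
    have hζv := (W.ζ_diff (0 + v) (by simpa using hv)).hasDerivAt.comp_add_const 0 v
    rw [zero_add] at hζv
    rw [W.℘_def v hv, neg_neg]
    exact (hζv.sub_const _).fun_sub hg.differentiableAt.hasDerivAt
  have h℘v : ContinuousAt (fun w => W.℘ (w + v)) 0 :=
    (W.℘_diff v hv).continuousAt.comp_of_eq (continuous_add_const v).continuousAt (zero_add v)
  have hE : ContinuousAt (fun w => φ w ^ 2 - 2 * dslope φ 0 w + deriv g w - W.℘ (w + v)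
      - W.℘ v - l2) 0 := by
    have := continuousAt_dslope_same.2 hφ.differentiableAt
    have := hφ.continuousAt
    have := hg.deriv.continuousAt
    fun_prop
  convert (hE.tendsto.mono_left nhdsWithin_le_nhds).congr' ?_ using 2
  · simp [hφ0, dslope_same, hφ.deriv, l2_eq_three_mul_deriv hg hζ hL]
    ring
  -- `μ = φ - w⁻¹` off `0`, and the double poles of `μ²` and `℘` cancel
  filter_upwards [hζ, eventually_wp_eq hg hζ, self_mem_nhdsWithin] with w hw h℘ (hw0 : w ≠ 0)
  rw [additionDefect, μ, dslope_of_ne _ hw0, slope_def_field, hφ0, hw.2, h℘]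
  field_simp
  ring

end Laurent

theorem eventually_deriv_wp_ne_zero : ∀ᶠ w in 𝓝[≠] 0, w ∉ W.Γ ∧ deriv W.℘ w ≠ 0 := by
  obtain ⟨g, hg, -, hζ⟩ := W.exists_zeta_eq_inv_add
  have hg'' : ContinuousAt (deriv (deriv g)) 0 := hg.deriv.deriv.continuousAt
  have hc : ContinuousAt (fun w => -2 - w ^ 3 * deriv (deriv g) w) 0 := by fun_prop
  filter_upwards [hζ, eventually_deriv_wp_eq hg hζ, self_mem_nhdsWithin,
    nhdsWithin_le_nhds (hc.eventually_ne (y := 0) (by norm_num))] with w hw h℘' hw0 hne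
  refine ⟨hw.1, ?_⟩
  rw [h℘', div_sub' (pow_ne_zero 3 hw0)]
  exact div_ne_zero hne (pow_ne_zero 3 hw0)

theorem deriv_wp_mul_deriv_deriv_wp {l2 l1 l0 : ℂ} (hL : W.OnCurveL l2 l1 l0) {w : ℂ}
    (hw : w ∉ W.Γ) : deriv W.℘ w * deriv (deriv W.℘) w
      = deriv W.℘ w * (6 * W.℘ w ^ 2 + 4 * l2 * W.℘ w + 2 * l1) := by
  have hp := (W.℘_diff w hw).hasDerivAt
  have hcurve : (fun z => (deriv W.℘ z / 2) ^ 2) =ᶠ[𝓝 w]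
      fun z => W.℘ z ^ 3 + l2 * W.℘ z ^ 2 + l1 * W.℘ z + l0 := by
    filter_upwards [W.isOpen_compl_Γ.mem_nhds hw] with z hz using hL z hz
  have hd := hcurve.deriv_eq
  rw [(((W.℘_diff2 w hw).hasDerivAt.div_const 2).fun_pow 2).deriv,
    ((((hp.fun_pow 3).fun_add ((hp.fun_pow 2).const_mul l2)).fun_add
      (hp.const_mul l1)).add_const l0).deriv]
    at hd
  push_cast at hd
  linear_combination 2 * hd

theorem deriv_deriv_wp {l2 l1 l0 : ℂ} (hL : W.OnCurveL l2 l1 l0) {z : ℂ} (hz : z ∉ W.Γ) :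
    deriv (deriv W.℘) z = 6 * W.℘ z ^ 2 + 4 * l2 * W.℘ z + 2 * l1 := by
  obtain ⟨z₀, hz₀⟩ :=
    (eventually_nhdsNE_eventually_nhds_iff.2 W.eventually_deriv_wp_ne_zero).exists
  have hA : AnalyticOnNhd ℂ
      (fun w => deriv (deriv W.℘) w - (6 * W.℘ w ^ 2 + 4 * l2 * W.℘ w + 2 * l1)) W.Γᶜ :=
    fun w hw => (W.analyticOnNhd_deriv_wp.deriv w hw).sub (by
      have := W.analyticOnNhd_wp w hw
      fun_prop)
  have hΓc := (W.countable_Γ.isConnected_compl_of_one_lt_rank (by simp)).isPreconnected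
  refine sub_eq_zero.1 (hA.eqOn_zero_of_preconnected_of_eventuallyEq_zero hΓc
    hz₀.self_of_nhds.1 ?_ hz)
  filter_upwards [hz₀] with w hw
  exact sub_eq_zero.2 (mul_left_cancel₀ hw.2 (W.deriv_wp_mul_deriv_deriv_wp hL hw.1))

theorem addition_wronskian_identity {a b a' b' a'' b'' m l2 l1 l0 : ℂ}
    (ha' : (a' / 2) ^ 2 = a ^ 3 + l2 * a ^ 2 + l1 * a + l0)
    (hb' : (b' / 2) ^ 2 = b ^ 3 + l2 * b ^ 2 + l1 * b + l0)
    (ha'' : a'' = 6 * a ^ 2 + 4 * l2 * a + 2 * l1) (hb'' : b'' = 6 * b ^ 2 + 4 * l2 * b + 2 * l1) :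
    (2 * (a - b) ^ 2 + 2 * m * (a' - b') - a'' - b'') * (a - b)
      = (2 * m * (a - b) - a' - b') * (a' - b') := by
  rw [ha'', hb'']
  linear_combination 4 * ha' - 4 * hb'

theorem isOpen_compl_Γ_inter (v : ℂ) : IsOpen (W.Γᶜ ∩ (· + v) ⁻¹' W.Γᶜ) :=
  W.isOpen_compl_Γ.inter (W.isOpen_compl_Γ.preimage (continuous_add_const v))

theorem isPreconnected_compl_Γ_inter (v : ℂ) : IsPreconnected (W.Γᶜ ∩ (· + v) ⁻¹' W.Γᶜ) := by
  rw [preimage_compl, ← compl_union]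
  have hcount := W.countable_Γ.union (W.countable_Γ.preimage (add_left_injective v))
  exact (hcount.isConnected_compl_of_one_lt_rank (by simp)).isPreconnected

theorem additionDefect_eq_zero {l2 l1 l0 : ℂ} (hL : W.OnCurveL l2 l1 l0) {v u : ℂ}
    (hv : v ∉ W.Γ) (hu : u ∉ W.Γ) (huv : u + v ∉ W.Γ) : W.additionDefect l2 v u = 0 := by
  set U := W.Γᶜ ∩ (· + v) ⁻¹' W.Γᶜ
  have hUo := W.isOpen_compl_Γ_inter v
  have hUc := W.isPreconnected_compl_Γ_inter v
  obtain ⟨g, hg, hg0, hζ⟩ := W.exists_zeta_eq_inv_add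
  have hU0 : ∀ᶠ w in 𝓝[≠] 0, w ∈ U := by
    filter_upwards [hζ, nhdsWithin_le_nhds ((W.isOpen_compl_Γ.preimage
      (continuous_add_const v)).mem_nhds (by simpa using hv))] with w hw hwv using ⟨hw.1, hwv⟩
  have hμ := tendsto_mul_μ hg hζ hv
  obtain ⟨z₀, hz₀, hDz₀⟩ : ∃ z₀ ∈ U, W.℘ z₀ - W.℘ (z₀ + v) ≠ 0 := by
    by_contra! hD
    obtain ⟨c, hc⟩ := hUo.exists_is_const_of_deriv_eq_zero hUc
      (fun z hz => (W.hasDerivAt_μ hz.1 hz.2).differentiableAt.differentiableWithinAt)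
      (fun z hz => (W.hasDerivAt_μ hz.1 hz.2).deriv.trans (hD z hz))
    exact neg_ne_zero.2 one_ne_zero (eq_zero_of_tendsto_mul_of_eventually_const (hU0.mono hc) hμ)
  obtain ⟨κ, hκ⟩ := exists_eqOn_const_mul_of_wronskian hUo hUc
    (fun z hz => W.hasDerivAt_deriv_additionDefect hz.1 hz.2)
    (fun z hz => W.hasDerivAt_wp_sub_wp_add hz.1 hz.2)
    (fun z hz => addition_wronskian_identity (hL z hz.1) (hL _ hz.2)
      (W.deriv_deriv_wp hL hz.1) (W.deriv_deriv_wp hL hz.2)) hz₀ hDz₀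
  have hA : ∀ z ∈ U, HasDerivAt (fun w => W.additionDefect l2 v w - κ * W.μ v w) 0 z :=
    fun z hz => ((W.hasDerivAt_additionDefect hz.1 hz.2 l2).fun_sub
      ((W.hasDerivAt_μ hz.1 hz.2).const_mul κ)).congr_deriv (by linear_combination hκ hz)
  obtain ⟨C, hC⟩ := hUo.exists_is_const_of_deriv_eq_zero hUc
    (fun z hz => (hA z hz).differentiableAt.differentiableWithinAt) (fun z hz => (hA z hz).deriv)
  have hA0 := tendsto_additionDefect hg hζ hL hg0 hv
  have hκ0 : κ = 0 := by
    refine eq_zero_of_tendsto_mul_of_eventually_const (hU0.mono hC) ?_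
    convert ((tendsto_id.mono_left nhdsWithin_le_nhds).mul hA0).sub (hμ.const_mul κ) using 2 <;>
      simp [mul_sub, mul_left_comm]
  have hC0 : C = 0 := by
    refine tendsto_nhds_unique (tendsto_const_nhds.congr' ?_) hA0
    filter_upwards [hU0] with w hw
    simpa [hκ0] using (hC w hw).symm
  simpa [hκ0, hC0] using hC u ⟨hu, huv⟩

end WeierstrassData

/-- The Miura relation: with `μ(u) = ζ(u+v) - ζ(u) - ζ(v)`,
`2℘(u) + λ₂ + ℘(v) = μ² + μ'`. -/
theorem miura_relation (W : WeierstrassData) (l2 l1 l0 : ℂ)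
    (hL : W.OnCurveL l2 l1 l0) (v : ℂ) (hv : v ∉ W.Γ)
    (μ : ℂ → ℂ) (hμ : ∀ u, μ u = W.ζ (u + v) - W.ζ u - W.ζ v)
    (u : ℂ) (hu : u ∉ W.Γ) (huv : u + v ∉ W.Γ) :
    2 * W.℘ u + l2 + W.℘ v = μ u ^ 2 + deriv μ u := by
  have hμv : μ = W.μ v := funext hμ
  have hadd := W.additionDefect_eq_zero hL hv hu huv
  rw [WeierstrassData.additionDefect] at hadd
  rw [hμv, (W.hasDerivAt_μ hu huv).deriv]
  linear_combination -hadd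
end

section
/- For a monic polynomial f of degree 2g+1 and F(x) = ∏ᵢ(x-xᵢ) with distinct roots, and x̃ with F(x̃) ≠ 0 and x̃ ≠ xᵢ, the identity Σ_{k=1}^g (1/F'(x_k))·[∂/∂x (f(x)/((x-x̃)F'(x)))]_{x=x_k} = -f(x̃)/F(x̃)² + λ_{2g} + x̃ + 2(x₁+⋯+x_g) holds as an identity of rational functions, where λ_{2g} is the coefficient of x^{2g} in f and F'(x) denotes dF/dx. -/
/-!
The left-hand side is the sum of the residues of `R = f / ((X - x̃) F²)` at its double poles
`xₖ`: writing `F = (X - xₖ) Qₖ`, the residue there is `(f / ((X - x̃) Qₖ²))'(xₖ)`, and this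
equals `(f / ((X - x̃) F'))'(xₖ) / F'(xₖ)` because `F'(xₖ) = Qₖ(xₖ)` and `F''(xₖ) = 2 Qₖ'(xₖ)`.
The residue at `x̃` is `f(x̃) / F(x̃)²`. As `f` and `(X - x̃) F²` are both monic of degree
`2g + 1`, the residues of `R` are those of `N / ((X - x̃) F²)` with `N = f - (X - x̃) F²` of
degree `≤ 2g`, and their sum is the coefficient of `X ^ 2g` in `N`, namely
`λ_{2g} + x̃ + 2 Σ xᵢ`. That last residue theorem is proved by partial fractions: subtracting
the principal parts from `N` leaves a polynomial of degree `≤ 2g` divisible by `(X - x̃) F²`,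
hence zero.
-/

open Polynomial Finset Lagrange

namespace Polynomial

variable {K : Type*} [Field K]

/-- `(p / q)'(a)` by the quotient rule (junk value `0` when `q.eval a = 0`). -/
noncomputable def quotDerivAt (p q : K[X]) (a : K) : K :=
  (p.derivative.eval a * q.eval a - p.eval a * q.derivative.eval a) / q.eval a ^ 2

theorem sq_X_sub_C_dvd_iff {R : Type*} [CommRing R] {p : R[X]} {a : R} :
    (X - C a) ^ 2 ∣ p ↔ p.eval a = 0 ∧ p.derivative.eval a = 0 := by
  constructor
  · rintro ⟨m, rfl⟩
    simp [derivative_mul, derivative_X_sub_C_sq]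
  · rintro ⟨h0, h1⟩
    obtain ⟨m, rfl⟩ := dvd_iff_isRoot.2 h0
    have hm : m.eval a = 0 := by simpa [derivative_mul] using h1
    obtain ⟨m', rfl⟩ := dvd_iff_isRoot.2 hm
    exact ⟨m', by ring⟩

theorem sq_X_sub_C_dvd_sub_taylor_mul {p q : K[X]} {a : K} (hq : q.eval a ≠ 0) :
    (X - C a) ^ 2 ∣ p - (C (quotDerivAt p q a) * (X - C a) + C (p.eval a / q.eval a)) * q := by
  rw [sq_X_sub_C_dvd_iff]
  simp only [quotDerivAt, eval_sub, eval_mul, eval_add, eval_C, eval_X, sub_self, derivative_sub,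
    derivative_mul, derivative_add, derivative_C, derivative_X, zero_mul, zero_add, eval_one,
    eval_zero, mul_zero, sub_zero]
  constructor <;> field_simp <;> ring

theorem quotDerivAt_sub_of_sq_dvd {p q G : K[X]} {a : K} (hG : (X - C a) ^ 2 ∣ G) :
    quotDerivAt (p - G) q a = quotDerivAt p q a := by
  obtain ⟨h0, h1⟩ := sq_X_sub_C_dvd_iff.1 hG
  simp [quotDerivAt, h0, h1]

/-- With `F = (X - a) * Q`, this turns the residue `(p / (w Q²))'(a)` of `p / (w F²)` at `a`
into the form `(p / (w F'))'(a) / F'(a)` of the theorem. -/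
theorem quotDerivAt_mul_sq (p w Q : K[X]) (a : K) :
    quotDerivAt p (w * Q ^ 2) a
      = quotDerivAt p (w * derivative ((X - C a) * Q)) a / Q.eval a := by
  rcases eq_or_ne (Q.eval a) 0 with hQ | hQ
  · simp [quotDerivAt, hQ]
  rcases eq_or_ne (w.eval a) 0 with hw | hw
  · simp [quotDerivAt, hw]
  simp only [quotDerivAt, derivative_mul, derivative_sub, derivative_add, derivative_X,
    derivative_C, derivative_pow, derivative_one, derivative_zero, eval_mul, eval_add, eval_sub,
    eval_pow, eval_X, eval_C, eval_one, eval_zero, sub_self]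
  rw [div_div, div_eq_div_iff (by simp [hQ, hw]) (by simp [hQ, hw])]
  ring

theorem hasDerivAt_eval_div_eval {𝕜 : Type*} [NontriviallyNormedField 𝕜] (p q : 𝕜[X]) {a : 𝕜}
    (hq : q.eval a ≠ 0) : HasDerivAt (fun s => p.eval s / q.eval s) (quotDerivAt p q a) a :=
  (p.hasDerivAt a).div (q.hasDerivAt a) hq

variable {ι : Type*} [Fintype ι] (r : ι → K) (t : K)

theorem isMonicOfDegree_X_sub_C_mul_nodal_sq :
    IsMonicOfDegree ((X - C t) * nodal univ r ^ 2) (2 * Fintype.card ι + 1) := by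
  have h := (isMonicOfDegree_X_sub_one t).mul ((⟨natDegree_nodal, nodal_monic⟩ :
    IsMonicOfDegree (nodal univ r) #univ).pow 2)
  rwa [card_univ, Nat.add_comm 1, Nat.mul_comm _ 2] at h

theorem coeff_X_sub_C_mul_nodal_sq :
    ((X - C t) * nodal univ r ^ 2).coeff (2 * Fintype.card ι) = -(t + 2 * ∑ i, r i) := by
  have hdeg := (isMonicOfDegree_X_sub_C_mul_nodal_sq r t).natDegree_eq
  have hnext := (monic_X_sub_C t).nextCoeff_mul (nodal_monic.pow 2 : (nodal univ r ^ 2).Monic)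
  rw [nextCoeff_of_natDegree_pos (by omega), hdeg, Nat.add_sub_cancel] at hnext
  rw [hnext, nextCoeff_X_sub_C, nodal_monic.nextCoeff_pow, nodal_eq, prod_X_sub_C_nextCoeff,
    nsmul_eq_mul]
  push_cast
  ring

variable {r t}

theorem eq_zero_of_X_sub_C_dvd_of_sq_dvd (hr : Function.Injective r) (ht : ∀ i, t ≠ r i)
    {P : K[X]} (hdeg : P.natDegree ≤ 2 * Fintype.card ι) (hPt : X - C t ∣ P)
    (hPr : ∀ k, (X - C (r k)) ^ 2 ∣ P) : P = 0 := by
  have hcop : IsCoprime (X - C t) (∏ k, (X - C (r k)) ^ 2) :=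
    IsCoprime.prod_right fun k _ =>
      (isCoprime_X_sub_C_of_isUnit_sub (sub_ne_zero.2 (ht k)).isUnit).pow_right
  have hdvd : (X - C t) * ∏ k, (X - C (r k)) ^ 2 ∣ P :=
    hcop.mul_dvd hPt (Fintype.prod_dvd_of_coprime
      (fun j k hjk => (pairwise_coprime_X_sub_C hr hjk).pow) hPr)
  refine eq_zero_of_dvd_of_natDegree_lt hdvd ?_
  rw [prod_pow, ← nodal_eq, (isMonicOfDegree_X_sub_C_mul_nodal_sq r t).natDegree_eq]
  omega

variable [DecidableEq ι] (r t)

/-- `(X - t) * (nodal univ r)² = (X - r k)² * nodeCofactor r t k`, so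
`quotDerivAt N (nodeCofactor r t k) (r k)` is the residue of `N / ((X - t) * (nodal univ r)²)`
at its double pole `r k`. -/
noncomputable def nodeCofactor (k : ι) : K[X] :=
  (X - C t) * nodal (univ.erase k) r ^ 2

variable {r t}

theorem nodeCofactor_monic (k : ι) : (nodeCofactor r t k).Monic :=
  (monic_X_sub_C t).mul (nodal_monic.pow 2)

theorem natDegree_nodeCofactor (k : ι) :
    (nodeCofactor r t k).natDegree = 2 * Fintype.card ι - 1 := by
  have hcard : 0 < Fintype.card ι := Fintype.card_pos_iff.2 ⟨k⟩
  rw [nodeCofactor, (monic_X_sub_C t).natDegree_mul (nodal_monic.pow 2), natDegree_X_sub_C,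
    natDegree_pow, natDegree_nodal, card_erase_of_mem (mem_univ k), card_univ]
  omega

theorem eval_nodeCofactor_ne_zero (hr : Function.Injective r) (ht : ∀ i, t ≠ r i) (k : ι) :
    (nodeCofactor r t k).eval (r k) ≠ 0 := by
  have hQ : (nodal (univ.erase k) r).eval (r k) ≠ 0 :=
    eval_nodal_not_at_node fun i hi => hr.ne (ne_of_mem_erase hi).symm
  simpa [nodeCofactor, sub_eq_zero, hQ] using (ht k).symm

theorem sq_X_sub_C_dvd_nodeCofactor {j k : ι} (hjk : j ≠ k) :
    (X - C (r k)) ^ 2 ∣ nodeCofactor r t j :=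
  dvd_mul_of_dvd_right
    (pow_dvd_pow_of_dvd (X_sub_C_dvd_nodal r (mem_erase.2 ⟨hjk.symm, mem_univ k⟩)) 2) _

theorem natDegree_mul_nodeCofactor_le (a b : K) (k : ι) :
    ((C a * (X - C (r k)) + C b) * nodeCofactor r t k).natDegree ≤ 2 * Fintype.card ι := by
  have hcard : 0 < Fintype.card ι := Fintype.card_pos_iff.2 ⟨k⟩
  have hlin : (C a * (X - C (r k)) + C b).natDegree ≤ 1 := by compute_degree
  have hmul := natDegree_mul_le (p := C a * (X - C (r k)) + C b) (q := nodeCofactor r t k)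
  rw [natDegree_nodeCofactor] at hmul
  omega

theorem coeff_mul_nodeCofactor (a b : K) (k : ι) :
    ((C a * (X - C (r k)) + C b) * nodeCofactor r t k).coeff (2 * Fintype.card ι) = a := by
  have hcard : 0 < Fintype.card ι := Fintype.card_pos_iff.2 ⟨k⟩
  have hmonic := (monic_X_sub_C (r k)).mul (nodeCofactor_monic (r := r) (t := t) k)
  have hdeg : ((X - C (r k)) * nodeCofactor r t k).natDegree = 2 * Fintype.card ι := by
    rw [(monic_X_sub_C _).natDegree_mul (nodeCofactor_monic k), natDegree_X_sub_C,
      natDegree_nodeCofactor]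
    omega
  have hlow : (nodeCofactor r t k).coeff (2 * Fintype.card ι) = 0 :=
    coeff_eq_zero_of_natDegree_lt (by rw [natDegree_nodeCofactor]; omega)
  rw [add_mul, mul_assoc, coeff_add, coeff_C_mul, coeff_C_mul, ← hdeg, hmonic.coeff_natDegree,
    hdeg, hlow, mul_one, mul_zero, add_zero]

theorem coeff_eq_eval_div_add_sum_quotDerivAt (hr : Function.Injective r) (ht : ∀ i, t ≠ r i)
    {N : K[X]} (hN : N.natDegree ≤ 2 * Fintype.card ι) :
    N.coeff (2 * Fintype.card ι) =
      N.eval t / (nodal univ r).eval t ^ 2 + ∑ k, quotDerivAt N (nodeCofactor r t k) (r k) := by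
  set F := nodal univ r
  set c := N.eval t / F.eval t ^ 2
  set principalPart : ι → K[X] := fun k =>
    (C (quotDerivAt N (nodeCofactor r t k) (r k)) * (X - C (r k))
      + C (N.eval (r k) / (nodeCofactor r t k).eval (r k))) * nodeCofactor r t k
  have hFt : F.eval t ≠ 0 := eval_nodal_not_at_node fun i _ => ht i
  have hdecomp : N = C c * F ^ 2 + ∑ k, principalPart k := by
    refine eq_of_sub_eq_zero (eq_zero_of_X_sub_C_dvd_of_sq_dvd hr ht ?_ ?_ fun k => ?_)
    · refine (natDegree_sub_le _ _).trans (max_le hN (natDegree_add_le_of_degree_le ?_ ?_))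
      · refine (natDegree_C_mul_le _ _).trans ?_
        rw [natDegree_pow, natDegree_nodal, card_univ]
      · exact natDegree_sum_le_of_forall_le _ _ fun k _ => natDegree_mul_nodeCofactor_le _ _ k
    · rw [sub_add_eq_sub_sub]
      refine dvd_sub (dvd_iff_isRoot.2 ?_) (dvd_sum fun k _ => dvd_mul_of_dvd_right
        (dvd_mul_right _ _) _)
      simp [c, hFt]
    · rw [← add_sum_erase _ _ (mem_univ k),
        show ∀ A B D : K[X], N - (A + (D + B)) = N - D - (B + A) by intros; ring]
      refine dvd_sub (sq_X_sub_C_dvd_sub_taylor_mul (eval_nodeCofactor_ne_zero hr ht k))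
        (dvd_add (dvd_sum fun j hj => dvd_mul_of_dvd_right
          (sq_X_sub_C_dvd_nodeCofactor (ne_of_mem_erase hj)) _) ?_)
      exact dvd_mul_of_dvd_right (pow_dvd_pow_of_dvd (X_sub_C_dvd_nodal r (mem_univ k)) 2) _
  have hF2 : (F ^ 2).coeff (2 * Fintype.card ι) = 1 := by
    simpa [natDegree_nodal, F] using (nodal_monic (s := univ) (v := r)).pow 2 |>.coeff_natDegree
  conv_lhs => rw [hdecomp]
  simp only [coeff_add, coeff_C_mul, finsetSum_coeff, principalPart, coeff_mul_nodeCofactor, hF2,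
    mul_one]

theorem sum_quotDerivAt_nodeCofactor_of_isMonicOfDegree (hr : Function.Injective r)
    (ht : ∀ i, t ≠ r i) {f : K[X]} (hf : IsMonicOfDegree f (2 * Fintype.card ι + 1)) :
    ∑ k, quotDerivAt f (nodeCofactor r t k) (r k)
      = -f.eval t / (nodal univ r).eval t ^ 2 + f.coeff (2 * Fintype.card ι) + t
        + 2 * ∑ i, r i := by
  have hG : ∀ k, (X - C (r k)) ^ 2 ∣ (X - C t) * nodal univ r ^ 2 := fun k =>
    dvd_mul_of_dvd_right (pow_dvd_pow_of_dvd (X_sub_C_dvd_nodal r (mem_univ k)) 2) _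
  have hN : (f - (X - C t) * nodal univ r ^ 2).natDegree ≤ 2 * Fintype.card ι :=
    Nat.le_of_lt_succ (hf.natDegree_sub_lt (by omega) (isMonicOfDegree_X_sub_C_mul_nodal_sq r t))
  have hres := coeff_eq_eval_div_add_sum_quotDerivAt hr ht hN
  simp only [coeff_sub, coeff_X_sub_C_mul_nodal_sq, eval_sub, eval_mul, eval_X, eval_C, sub_self,
    zero_mul, sub_zero,
    fun k => quotDerivAt_sub_of_sq_dvd (p := f) (q := nodeCofactor r t k) (hG k)] at hres
  linear_combination -hres

theorem one_div_mul_deriv_eq_quotDerivAt_nodeCofactor {𝕜 : Type*} [NontriviallyNormedField 𝕜]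
    {r : ι → 𝕜} {t : 𝕜} (hr : Function.Injective r) (ht : ∀ i, t ≠ r i) (f : 𝕜[X]) (k : ι) :
    1 / (derivative (nodal univ r)).eval (r k)
        * deriv (fun s => f.eval s / ((s - t) * (derivative (nodal univ r)).eval s)) (r k)
      = quotDerivAt f (nodeCofactor r t k) (r k) := by
  have hQ : (nodal (univ.erase k) r).eval (r k) ≠ 0 :=
    eval_nodal_not_at_node fun i hi => hr.ne (ne_of_mem_erase hi).symm
  have hF' := eval_nodal_derivative_eval_node_eq (s := univ) (v := r) (mem_univ k)
  have hv : ((X - C t) * derivative (nodal univ r)).eval (r k) ≠ 0 := by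
    simpa [hF', hQ, sub_eq_zero] using (ht k).symm
  have hderiv := (hasDerivAt_eval_div_eval f _ hv).deriv
  simp only [eval_mul, eval_sub, eval_X, eval_C] at hderiv
  rw [hderiv, nodeCofactor, quotDerivAt_mul_sq, ← nodal_eq_mul_nodal_erase (mem_univ k), hF',
    one_div_mul_eq_div]

end Polynomial

/-- For monic `f` of degree `2g+1`, `F(x) = ∏ᵢ(x - xᵢ)` with distinct roots and
`x̃ ∉ {x₁,…,x_g}`,
`Σₖ (1/F'(xₖ))·[d/dx(f(x)/((x-x̃)F'(x)))]ₓ₌ₓₖ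
  = -f(x̃)/F(x̃)² + λ_{2g} + x̃ + 2(x₁+⋯+x_g)`. -/
theorem residue_sum_identity (g : ℕ) (x : Fin g → ℂ)
    (hx : Function.Injective x)
    (xt : ℂ) (hxt : ∀ i, xt ≠ x i)
    (f : Polynomial ℂ) (hmonic : f.Monic) (hdeg : f.natDegree = 2 * g + 1)
    (lam : ℂ) (hlam : lam = f.coeff (2 * g))
    (F : Polynomial ℂ) (hF : F = ∏ i : Fin g, (X - C (x i))) :
    ∑ k : Fin g, (1 / F.derivative.eval (x k))
        * deriv (fun s : ℂ => f.eval s / ((s - xt) * F.derivative.eval s)) (x k)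
      = - f.eval xt / F.eval xt ^ 2 + lam + xt + 2 * ∑ i : Fin g, x i := by
  rw [← nodal_eq] at hF
  subst hF hlam
  have hf : IsMonicOfDegree f (2 * Fintype.card (Fin g) + 1) :=
    ⟨by rw [Fintype.card_fin, hdeg], hmonic⟩
  simp only [one_div_mul_deriv_eq_quotDerivAt_nodeCofactor hx hxt,
    sum_quotDerivAt_nodeCofactor_of_isMonicOfDegree hx hxt hf, Fintype.card_fin]
end
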